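/- arXiv:2603.07276 — 2 statements merged into one kernel-verified Lean document; each statement's English description precedes it below -/
import Mathlib

section
/- Let $C$ be symmetric positive definite, $A \in \mathbb{R}^{m \times d}$, $\sigma, \tau > 0$, and let $K = C A^\top (ACA^\top + \sigma^2 I)^{-1}$ be the Kalman gain. Then $(C^{-1} + \sigma^{-2} A^\top A + \tau^{-2} I)^{-1}\,(\sigma^{-2} A^\top + \tau^{-2} K) = K$. -/
/-!
Write `K = C Aᵀ S⁻¹` with `S = A C Aᵀ + σ² I`. The push-through identity
`(C⁻¹ + σ⁻² AᵀA) C Aᵀ = σ⁻² Aᵀ S` gives `(C⁻¹ + σ⁻² AᵀA) K = σ⁻² Aᵀ`. Adding `τ⁻² K`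
to both sides shows that `K` solves `(C⁻¹ + σ⁻² AᵀA + τ⁻² I) X = σ⁻² Aᵀ + τ⁻² K`, and positive
definiteness makes that system uniquely solvable.
-/

open Matrix

namespace Matrix

variable {𝕜 : Type*} [Field 𝕜] {n m : Type*}

theorem inv_add_smul_transpose_mul_mul_mul_transpose [Fintype n] [Fintype m] [DecidableEq n]
    [DecidableEq m] {C : Matrix n n 𝕜} (hC : IsUnit C) (A : Matrix m n 𝕜) {s : 𝕜} (hs : s ≠ 0) :
    (C⁻¹ + s⁻¹ • (Aᵀ * A)) * (C * Aᵀ) = s⁻¹ • (Aᵀ * (A * C * Aᵀ + s • 1)) := by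
  rw [Matrix.add_mul, ← Matrix.mul_assoc, nonsing_inv_mul _ ((isUnit_iff_isUnit_det C).mp hC),
    Matrix.mul_add, Matrix.mul_smul, smul_add, smul_smul, inv_mul_cancel₀ hs, one_smul,
    Matrix.one_mul, Matrix.mul_one, add_comm, smul_mul, Matrix.mul_assoc, Matrix.mul_assoc]

theorem inv_add_smul_transpose_mul_mul_kalmanGain [Fintype n] [Fintype m] [DecidableEq n]
    [DecidableEq m] {C : Matrix n n 𝕜} (hC : IsUnit C)
    {A : Matrix m n 𝕜} {s : 𝕜} (hs : s ≠ 0) (hS : IsUnit (A * C * Aᵀ + s • 1)) :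
    (C⁻¹ + s⁻¹ • (Aᵀ * A)) * (C * Aᵀ * (A * C * Aᵀ + s • 1)⁻¹) = s⁻¹ • Aᵀ := by
  rw [← Matrix.mul_assoc, inv_add_smul_transpose_mul_mul_mul_transpose hC A hs, smul_mul,
    Matrix.mul_assoc, mul_nonsing_inv _ ((isUnit_iff_isUnit_det _).mp hS), Matrix.mul_one]

theorem inv_add_smul_one_mul_add_smul [Fintype n] [DecidableEq n] {P : Matrix n n 𝕜}
    {X B : Matrix n m 𝕜} (hPX : P * X = B) {c : 𝕜} (h : IsUnit (P + c • 1)) :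
    (P + c • 1)⁻¹ * (B + c • X) = X := by
  have hX : (P + c • 1) * X = B + c • X := by rw [Matrix.add_mul, hPX, smul_mul, Matrix.one_mul]
  rw [← hX, nonsing_inv_mul_cancel_left _ _ ((isUnit_iff_isUnit_det _).mp h)]

theorem PosSemidef.mul_mul_transpose_add_smul_one [Fintype n] [Fintype m] [DecidableEq m]
    {C : Matrix n n ℝ} (hC : C.PosSemidef) (A : Matrix m n ℝ) {s : ℝ} (hs : 0 < s) :
    (A * C * Aᵀ + s • 1).PosDef := by
  have hACA : (A * C * Aᵀ).PosSemidef := by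
    simpa using hC.mul_mul_conjTranspose_same A
  exact PosDef.posSemidef_add hACA (PosDef.one.smul hs)

theorem PosDef.inv_add_smul_transpose_mul_add_smul_one [Fintype n] [Fintype m] [DecidableEq n]
    {C : Matrix n n ℝ} (hC : C.PosDef) (A : Matrix m n ℝ) {s t : ℝ} (hs : 0 ≤ s) (ht : 0 < t) :
    (C⁻¹ + s • (Aᵀ * A) + t • 1).PosDef := by
  have hAA : (Aᵀ * A).PosSemidef := by simpa using posSemidef_conjTranspose_mul_self A
  exact (hC.inv.add_posSemidef (hAA.smul hs)).add (PosDef.one.smul ht)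

end Matrix

/-- With Kalman gain `K = C Aᵀ (A C Aᵀ + σ² I)⁻¹`, one has
`(C⁻¹ + σ⁻² AᵀA + τ⁻² I)⁻¹ (σ⁻² Aᵀ + τ⁻² K) = K`. -/
theorem stmt13 {d m : ℕ} (C : Matrix (Fin d) (Fin d) ℝ) (hC : C.PosDef)
    (A : Matrix (Fin m) (Fin d) ℝ) (σ τ : ℝ) (hσ : 0 < σ) (hτ : 0 < τ) :
    (C⁻¹ + (σ ^ 2)⁻¹ • (Aᵀ * A) + (τ ^ 2)⁻¹ • (1 : Matrix (Fin d) (Fin d) ℝ))⁻¹ *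
        ((σ ^ 2)⁻¹ • Aᵀ +
          (τ ^ 2)⁻¹ •
            (C * Aᵀ * (A * C * Aᵀ + σ ^ 2 • (1 : Matrix (Fin m) (Fin m) ℝ))⁻¹)) =
      C * Aᵀ * (A * C * Aᵀ + σ ^ 2 • (1 : Matrix (Fin m) (Fin m) ℝ))⁻¹ := by
  have hσ2 : 0 < σ ^ 2 := by positivity
  have hS := hC.posSemidef.mul_mul_transpose_add_smul_one A hσ2
  have hM := hC.inv_add_smul_transpose_mul_add_smul_one A (s := (σ ^ 2)⁻¹) (t := (τ ^ 2)⁻¹)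
    (by positivity) (by positivity)
  exact inv_add_smul_one_mul_add_smul
    (inv_add_smul_transpose_mul_mul_kalmanGain hC.isUnit hσ2.ne' hS.isUnit) hM.isUnit
end

section
/- Let $K_\theta \in \mathbb{R}^{d \times d}$ be invertible with $K_\theta K_\theta^\top = C$, let $\Sigma_\phi = (I + \tau^{-2} K_\theta^\top K_\theta + \sigma^{-2} K_\theta^\top A^\top A K_\theta)^{-1}$, and let $K_\phi = \Sigma_\phi K_\theta^\top (\sigma^{-2} A^\top + \tau^{-2} K)$ with $K = CA^\top(ACA^\top + \sigma^2 I)^{-1}$. Then $K_\theta K_\phi = K$. -/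
/-!
Write `M = 1 + τ⁻² KθᵀKθ + σ⁻² KθᵀAᵀAKθ = Kθᵀ (C⁻¹ + τ⁻² I + σ⁻² AᵀA) Kθ` for the precision
whose inverse is `Sφ`. The Kalman gain satisfies the information form `(C⁻¹ + σ⁻² AᵀA) K = σ⁻² Aᵀ`,
so `M (Kθ⁻¹ K) = Kθᵀ (σ⁻² Aᵀ + τ⁻² K)`, i.e. `Kφ = Kθ⁻¹ K`. Invertibility of `M` and of
`A C Aᵀ + σ² I` comes from positive definiteness, both being identity-like terms plus Gram matrices.
-/

open Matrix

namespace Matrix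

variable {n k 𝕜 : Type*} [Fintype n] [Fintype k]

section KalmanGain

variable [DecidableEq k]

noncomputable def kalmanGain [Field 𝕜] (C : Matrix n n 𝕜) (A : Matrix k n 𝕜) (s : 𝕜) :
    Matrix n k 𝕜 :=
  C * Aᵀ * (A * C * Aᵀ + s • 1)⁻¹

section Field

variable [Field 𝕜] [DecidableEq n]

theorem inv_mul_kalmanGain_mul_transpose {L : Matrix n n 𝕜} (hL : IsUnit L.det)
    (A : Matrix k n 𝕜) (s : 𝕜) :
    L⁻¹ * kalmanGain (L * Lᵀ) A s = Lᵀ * Aᵀ * (A * (L * Lᵀ) * Aᵀ + s • 1)⁻¹ := by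
  simp only [kalmanGain, Matrix.mul_assoc, nonsing_inv_mul_cancel_left _ _ hL]

/-- The information form `(C⁻¹ + s⁻¹ AᵀA) K = s⁻¹ Aᵀ` of the Kalman gain, conjugated by the
square root `L` of `C = L Lᵀ`. -/
theorem one_add_smul_mul_inv_mul_kalmanGain {L : Matrix n n 𝕜} (hL : IsUnit L.det)
    (A : Matrix k n 𝕜) {s : 𝕜} (hs : s ≠ 0) (hB : IsUnit (A * (L * Lᵀ) * Aᵀ + s • 1).det) :
    (1 + s⁻¹ • (Lᵀ * Aᵀ * A * L)) * (L⁻¹ * kalmanGain (L * Lᵀ) A s) = s⁻¹ • (Lᵀ * Aᵀ) := by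
  rw [inv_mul_kalmanGain_mul_transpose hL]
  set B := A * (L * Lᵀ) * Aᵀ + s • 1
  calc (1 + s⁻¹ • (Lᵀ * Aᵀ * A * L)) * (Lᵀ * Aᵀ * B⁻¹)
      = s⁻¹ • (Lᵀ * Aᵀ * (s • 1 + A * (L * Lᵀ) * Aᵀ) * B⁻¹) := by
        simp only [Matrix.add_mul, Matrix.mul_add, Matrix.smul_mul, Matrix.mul_smul, smul_add,
          smul_smul, inv_mul_cancel₀ hs, one_smul, Matrix.one_mul, Matrix.mul_one, Matrix.mul_assoc]
    _ = s⁻¹ • (Lᵀ * Aᵀ) := by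
        rw [add_comm, Matrix.mul_assoc, mul_nonsing_inv _ hB, Matrix.mul_one]

theorem precision_mul_inv_mul_kalmanGain {L : Matrix n n 𝕜} (hL : IsUnit L.det)
    (A : Matrix k n 𝕜) {s : 𝕜} (hs : s ≠ 0) (hB : IsUnit (A * (L * Lᵀ) * Aᵀ + s • 1).det)
    (t : 𝕜) :
    (1 + t • (Lᵀ * L) + s⁻¹ • (Lᵀ * Aᵀ * A * L)) * (L⁻¹ * kalmanGain (L * Lᵀ) A s) =
      Lᵀ * (s⁻¹ • Aᵀ + t • kalmanGain (L * Lᵀ) A s) := by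
  have hLL : Lᵀ * L * (L⁻¹ * kalmanGain (L * Lᵀ) A s) = Lᵀ * kalmanGain (L * Lᵀ) A s := by
    rw [Matrix.mul_assoc, mul_nonsing_inv_cancel_left _ _ hL]
  rw [add_right_comm, Matrix.add_mul, one_add_smul_mul_inv_mul_kalmanGain hL A hs hB,
    Matrix.smul_mul, hLL, Matrix.mul_add, Matrix.mul_smul, Matrix.mul_smul]

end Field

theorem posDef_mul_mul_transpose_add_smul_one (A : Matrix k n ℝ) (L : Matrix n n ℝ) {s : ℝ}
    (hs : 0 < s) : (A * (L * Lᵀ) * Aᵀ + s • 1).PosDef := by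
  have h : A * (L * Lᵀ) * Aᵀ = (A * L) * (A * L)ᴴ := by
    simp only [conjTranspose_eq_transpose_of_trivial, transpose_mul, Matrix.mul_assoc]
  rw [h]
  exact PosDef.posSemidef_add (posSemidef_self_mul_conjTranspose _) (PosDef.one.smul hs)

end KalmanGain

theorem posDef_one_add_smul_transpose_mul_add_smul [DecidableEq n] (L : Matrix n n ℝ)
    (A : Matrix k n ℝ) {t u : ℝ} (ht : 0 ≤ t) (hu : 0 ≤ u) :
    (1 + t • (Lᵀ * L) + u • (Lᵀ * Aᵀ * A * L)).PosDef := by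
  have h : Lᵀ * Aᵀ * A * L = (A * L)ᴴ * (A * L) := by
    simp only [conjTranspose_eq_transpose_of_trivial, transpose_mul, Matrix.mul_assoc]
  rw [h, add_assoc]
  refine PosDef.one.add_posSemidef (PosSemidef.add ?_ ?_)
  · simpa only [conjTranspose_eq_transpose_of_trivial] using
      (posSemidef_conjTranspose_mul_self L).smul ht
  · exact (posSemidef_conjTranspose_mul_self _).smul hu

end Matrix

theorem stmt14_general {d m : ℕ} (C : Matrix (Fin d) (Fin d) ℝ)
    (A : Matrix (Fin m) (Fin d) ℝ) (σ τ : ℝ) (hσ : 0 < σ)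
    (Kθ : Matrix (Fin d) (Fin d) ℝ) (hKθ : IsUnit Kθ.det)
    (hKθC : Kθ * Kθᵀ = C)
    (K : Matrix (Fin d) (Fin m) ℝ)
    (hK : K = C * Aᵀ * (A * C * Aᵀ + σ ^ 2 • (1 : Matrix (Fin m) (Fin m) ℝ))⁻¹)
    (Sφ : Matrix (Fin d) (Fin d) ℝ)
    (hSφ : Sφ = (1 + (τ ^ 2)⁻¹ • (Kθᵀ * Kθ) + (σ ^ 2)⁻¹ • (Kθᵀ * Aᵀ * A * Kθ))⁻¹)
    (Kφ : Matrix (Fin d) (Fin m) ℝ)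
    (hKφ : Kφ = Sφ * Kθᵀ * ((σ ^ 2)⁻¹ • Aᵀ + (τ ^ 2)⁻¹ • K)) :
    Kθ * Kφ = K := by
  subst hKθC hSφ hKφ
  have hK' : K = kalmanGain (Kθ * Kθᵀ) A (σ ^ 2) := hK
  have hσ2 : 0 < σ ^ 2 := by positivity
  have hB := (isUnit_iff_isUnit_det _).mp
    (posDef_mul_mul_transpose_add_smul_one A Kθ hσ2).isUnit
  have hM := (isUnit_iff_isUnit_det _).mp
    (posDef_one_add_smul_transpose_mul_add_smul Kθ A (t := (τ ^ 2)⁻¹) (u := (σ ^ 2)⁻¹)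
      (by positivity) (by positivity)).isUnit
  rw [Matrix.mul_assoc _ Kθᵀ, hK',
    ← precision_mul_inv_mul_kalmanGain hKθ A hσ2.ne' hB, nonsing_inv_mul_cancel_left _ _ hM,
    mul_nonsing_inv_cancel_left _ _ hKθ]

/-- At the joint optimum of the VFM objective in the linear-Gaussian setting,
the product of the generative weight `K_θ` and the optimal variational gain
`K_φ = Σ_φ K_θᵀ (σ⁻² Aᵀ + τ⁻² K)` equals the Kalman gain `K`. -/
theorem stmt14 {d m : ℕ} (C : Matrix (Fin d) (Fin d) ℝ) (hC : C.PosDef)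
    (A : Matrix (Fin m) (Fin d) ℝ) (σ τ : ℝ) (hσ : 0 < σ) (hτ : 0 < τ)
    (Kθ : Matrix (Fin d) (Fin d) ℝ) (hKθ : IsUnit Kθ.det)
    (hKθC : Kθ * Kθᵀ = C)
    (K : Matrix (Fin d) (Fin m) ℝ)
    (hK : K = C * Aᵀ * (A * C * Aᵀ + σ ^ 2 • (1 : Matrix (Fin m) (Fin m) ℝ))⁻¹)
    (Sφ : Matrix (Fin d) (Fin d) ℝ)
    (hSφ : Sφ = (1 + (τ ^ 2)⁻¹ • (Kθᵀ * Kθ) + (σ ^ 2)⁻¹ • (Kθᵀ * Aᵀ * A * Kθ))⁻¹)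
    (Kφ : Matrix (Fin d) (Fin m) ℝ)
    (hKφ : Kφ = Sφ * Kθᵀ * ((σ ^ 2)⁻¹ • Aᵀ + (τ ^ 2)⁻¹ • K)) :
    Kθ * Kφ = K :=
  stmt14_general C A σ τ hσ Kθ hKθ hKθC K hK Sφ hSφ Kφ hKφ
end
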